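/- arXiv:2010.07401 — 2 statements merged into one kernel-verified Lean document; each statement's English description precedes it below -/
import Mathlib

section
/- Let A, N, B, W₁, W₂ be complex matrices with W₁, W₂ Hermitian and W = W₁ − W₂. Suppose P₁ is a Hermitian solution of A*P₁ + P₁A + N*P₁N + W₁ − P₁BB*P₁ = 0 and P₂ is a Hermitian solution of (A−BB*P₁)*P₂ + P₂(A−BB*P₁) + N*P₂N − W₂ − P₂BB*P₂ = 0. Then P = P₁ + P₂ satisfies A*P + PA + N*PN + W − PBB*P = 0. -/
open Matrix

lemma riccati_aux {R : Type*} [Ring R] (a' a n' n q w w₁ w₂ p₁ p₂ : R)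
    (hW : w = w₁ - w₂)
    (h₁ : a' * p₁ + p₁ * a + n' * p₁ * n + w₁ - p₁ * q * p₁ = 0)
    (h₂ : (a' - p₁ * q) * p₂ + p₂ * (a - q * p₁) + n' * p₂ * n - w₂ - p₂ * q * p₂ = 0) :
    a' * (p₁ + p₂) + (p₁ + p₂) * a + n' * (p₁ + p₂) * n + w -
      (p₁ + p₂) * q * (p₁ + p₂) = 0 := by
  have key : a' * (p₁ + p₂) + (p₁ + p₂) * a + n' * (p₁ + p₂) * n + w -
      (p₁ + p₂) * q * (p₁ + p₂) =
      (a' * p₁ + p₁ * a + n' * p₁ * n + w₁ - p₁ * q * p₁) +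
      ((a' - p₁ * q) * p₂ + p₂ * (a - q * p₁) + n' * p₂ * n - w₂ - p₂ * q * p₂) := by
    rw [hW]; noncomm_ring
  rw [key, h₁, h₂, add_zero]

theorem riccati_splitting {n m : ℕ}
    (A N : Matrix (Fin n) (Fin n) ℂ) (B : Matrix (Fin n) (Fin m) ℂ)
    (W W₁ W₂ P₁ P₂ : Matrix (Fin n) (Fin n) ℂ)
    (hW₁ : W₁.IsHermitian) (hW₂ : W₂.IsHermitian) (hW : W = W₁ - W₂)
    (hP₁h : P₁.IsHermitian) (hP₂h : P₂.IsHermitian)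
    (h₁ : Aᴴ * P₁ + P₁ * A + Nᴴ * P₁ * N + W₁ - P₁ * B * Bᴴ * P₁ = 0)
    (h₂ : (A - B * Bᴴ * P₁)ᴴ * P₂ + P₂ * (A - B * Bᴴ * P₁) + Nᴴ * P₂ * N - W₂ -
        P₂ * B * Bᴴ * P₂ = 0) :
    Aᴴ * (P₁ + P₂) + (P₁ + P₂) * A + Nᴴ * (P₁ + P₂) * N + W -
        (P₁ + P₂) * B * Bᴴ * (P₁ + P₂) = 0 := by
  have hct : (A - B * Bᴴ * P₁)ᴴ = Aᴴ - P₁ * (B * Bᴴ) := by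
    rw [conjTranspose_sub, conjTranspose_mul, conjTranspose_mul,
      conjTranspose_conjTranspose, hP₁h.eq]
  rw [Matrix.mul_assoc P₁ B Bᴴ] at h₁
  rw [hct, Matrix.mul_assoc P₂ B Bᴴ] at h₂
  rw [Matrix.mul_assoc (P₁ + P₂) B Bᴴ]
  exact riccati_aux Aᴴ A Nᴴ N (B * Bᴴ) W W₁ W₂ P₁ P₂ hW h₁ h₂
end

section
/- Let A ∈ ℂ^{n×n}, B ∈ ℂ^{n×m}, W, V, R as in the Riccati equation A*P + PA + W − (B*P+V)*R^{-1}(B*P+V) = 0 with R > 0, and let P = P* be a solution. Then for every ω ∈ ℝ with iω ∉ σ(A), the Popov function satisfies Φ(ω) = (I + R^{-1}(B*P+V)(iωI−A)^{-1}B)* R (I + R^{-1}(B*P+V)(iωI−A)^{-1}B); in particular Φ(ω) ≥ 0. -/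
open Matrix Complex
open scoped ComplexOrder

/-- The Popov (frequency) function of the pair `(A,B)` with weight `M`. -/
noncomputable def Popov {n m : ℕ} (A : Matrix (Fin n) (Fin n) ℂ) (B : Matrix (Fin n) (Fin m) ℂ)
    (M : Matrix (Fin n ⊕ Fin m) (Fin n ⊕ Fin m) ℂ) (ω : ℝ) : Matrix (Fin m) (Fin m) ℂ :=
  (Matrix.fromRows (((Complex.I * ω) • (1 : Matrix (Fin n) (Fin n) ℂ) - A)⁻¹ * B)
      (1 : Matrix (Fin m) (Fin m) ℂ))ᴴ * M *
    Matrix.fromRows (((Complex.I * ω) • (1 : Matrix (Fin n) (Fin n) ℂ) - A)⁻¹ * B)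
      (1 : Matrix (Fin m) (Fin m) ℂ)

/-! Completing the square: with `L = Bᴴ P + V` and `X = (iω - A)⁻¹ B`, the right-hand side is
`R + L X + Xᴴ Lᴴ + Xᴴ Lᴴ R⁻¹ L X`. The Riccati equation trades `Xᴴ W X` for
`Xᴴ Lᴴ R⁻¹ L X - Xᴴ (Aᴴ P + P A) X`, and since `A X = iω X - B` with `iω` purely imaginary, the
`P`-terms of `Xᴴ (Aᴴ P + P A) X` cancel up to `-(Bᴴ P X + Xᴴ P B)`, which is what is missing. -/

namespace Matrix

variable {α : Type*} {n m : Type*} [Fintype n]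

theorem conjTranspose_fromRows_mul_fromBlocks_mul_fromRows [Semiring α] [StarRing α] [Fintype m]
    {k : Type*} (X : Matrix n k α) (Y : Matrix m k α) (W : Matrix n n α) (U : Matrix n m α)
    (V : Matrix m n α) (R : Matrix m m α) :
    (fromRows X Y)ᴴ * fromBlocks W U V R * fromRows X Y =
      Xᴴ * W * X + Xᴴ * U * Y + Yᴴ * V * X + Yᴴ * R * Y := by
  rw [conjTranspose_fromRows_eq_fromCols_conjTranspose, Matrix.mul_assoc,
    fromBlocks_mul_fromRows, fromCols_mul_fromRows]
  simp only [Matrix.mul_add, Matrix.mul_assoc]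
  abel

theorem mul_inv_smul_one_sub_mul [CommRing α] [DecidableEq n] {c : α} {A : Matrix n n α}
    (hA : IsUnit (c • (1 : Matrix n n α) - A)) (B : Matrix n m α) :
    A * ((c • 1 - A)⁻¹ * B) = c • ((c • 1 - A)⁻¹ * B) - B := by
  have hdet := (isUnit_iff_isUnit_det _).mp hA
  have key := mul_nonsing_inv_cancel_left _ B hdet
  rw [Matrix.sub_mul, Matrix.smul_mul, Matrix.one_mul, sub_eq_iff_eq_add'] at key
  rw [key, add_sub_cancel_right]

variable [CommRing α] [StarRing α]

theorem conjTranspose_mul_lyapunov_mul_of_mul_eq {c : α} (hc : star c = -c)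
    {A P : Matrix n n α} {X : Matrix n m α} {B : Matrix n m α} (hX : A * X = c • X - B) :
    Xᴴ * (Aᴴ * P + P * A) * X = -(Bᴴ * P * X + Xᴴ * P * B) := by
  have hXA : Xᴴ * Aᴴ = (-c) • Xᴴ - Bᴴ := by
    rw [← conjTranspose_mul, hX, conjTranspose_sub, conjTranspose_smul, hc]
  calc Xᴴ * (Aᴴ * P + P * A) * X = (Xᴴ * Aᴴ) * P * X + Xᴴ * P * (A * X) := by
        simp only [Matrix.mul_add, Matrix.add_mul, Matrix.mul_assoc]
    _ = -(Bᴴ * P * X + Xᴴ * P * B) := by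
        rw [hXA, hX]
        simp only [Matrix.sub_mul, Matrix.mul_sub, Matrix.smul_mul, Matrix.mul_smul, neg_smul,
          Matrix.neg_mul]
        abel

variable [Fintype m] [DecidableEq m]

theorem conjTranspose_one_add_inv_mul_mul_one_add_inv_mul {R : Matrix m m α}
    (hR : R.IsHermitian) (hdet : IsUnit R.det) (K : Matrix m m α) :
    (1 + R⁻¹ * K)ᴴ * R * (1 + R⁻¹ * K) = R + K + Kᴴ + Kᴴ * R⁻¹ * K := by
  have hRinv : (R⁻¹)ᴴ = R⁻¹ := hR.inv
  simp only [conjTranspose_add, conjTranspose_one, conjTranspose_mul, hRinv, Matrix.add_mul,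
    Matrix.mul_add, Matrix.one_mul, Matrix.mul_one, Matrix.mul_assoc,
    mul_nonsing_inv_cancel_left _ _ hdet, nonsing_inv_mul _ hdet]
  abel

theorem spectral_factorization_of_riccati [DecidableEq n] {R : Matrix m m α} (hR : R.IsHermitian)
    (hdet : IsUnit R.det) {A P W : Matrix n n α} (hP : P.IsHermitian) {B : Matrix n m α}
    {V : Matrix m n α}
    (hRic : Aᴴ * P + P * A + W - (Bᴴ * P + V)ᴴ * R⁻¹ * (Bᴴ * P + V) = 0)
    {c : α} (hc : star c = -c) {X : Matrix n m α} (hX : A * X = c • X - B) :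
    (fromRows X (1 : Matrix m m α))ᴴ * fromBlocks W Vᴴ V R * fromRows X (1 : Matrix m m α) =
      (1 + R⁻¹ * (Bᴴ * P + V) * X)ᴴ * R * (1 + R⁻¹ * (Bᴴ * P + V) * X) := by
  have hW : W = (Bᴴ * P + V)ᴴ * R⁻¹ * (Bᴴ * P + V) - (Aᴴ * P + P * A) := by
    rw [← sub_eq_zero.mp hRic]; abel
  have hL : (Bᴴ * P + V)ᴴ = P * B + Vᴴ := by
    rw [conjTranspose_add, conjTranspose_mul, conjTranspose_conjTranspose, hP.eq]
  have hLyap := conjTranspose_mul_lyapunov_mul_of_mul_eq hc (P := P) hX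
  rw [conjTranspose_fromRows_mul_fromBlocks_mul_fromRows, Matrix.mul_assoc R⁻¹,
    conjTranspose_one_add_inv_mul_mul_one_add_inv_mul hR hdet, hW, Matrix.mul_sub, Matrix.sub_mul,
    hLyap, conjTranspose_mul, hL]
  simp only [conjTranspose_one, Matrix.mul_one, Matrix.one_mul, Matrix.add_mul, Matrix.mul_add,
    Matrix.mul_assoc]
  abel

end Matrix

theorem popov_spectral_factorization {n m : ℕ}
    (A : Matrix (Fin n) (Fin n) ℂ) (B : Matrix (Fin n) (Fin m) ℂ)
    (W : Matrix (Fin n) (Fin n) ℂ) (V : Matrix (Fin m) (Fin n) ℂ)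
    (R : Matrix (Fin m) (Fin m) ℂ) (hR : R.PosDef)
    (P : Matrix (Fin n) (Fin n) ℂ) (hP : P.IsHermitian)
    (hRic : Aᴴ * P + P * A + W - (Bᴴ * P + V)ᴴ * R⁻¹ * (Bᴴ * P + V) = 0) :
    ∀ ω : ℝ, IsUnit ((Complex.I * ω) • (1 : Matrix (Fin n) (Fin n) ℂ) - A) →
      Popov A B (Matrix.fromBlocks W Vᴴ V R) ω =
        ((1 : Matrix (Fin m) (Fin m) ℂ) +
            R⁻¹ * (Bᴴ * P + V) *
              ((Complex.I * ω) • (1 : Matrix (Fin n) (Fin n) ℂ) - A)⁻¹ * B)ᴴ * R *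
          ((1 : Matrix (Fin m) (Fin m) ℂ) +
            R⁻¹ * (Bᴴ * P + V) *
              ((Complex.I * ω) • (1 : Matrix (Fin n) (Fin n) ℂ) - A)⁻¹ * B) ∧
        (Popov A B (Matrix.fromBlocks W Vᴴ V R) ω).PosSemidef := by
  intro ω hω
  have hc : star (Complex.I * ω) = -(Complex.I * ω) := by simp
  have hfact : Popov A B (fromBlocks W Vᴴ V R) ω = _ :=
    Matrix.mul_assoc (R⁻¹ * (Bᴴ * P + V)) _ B ▸
      spectral_factorization_of_riccati hR.isHermitian ((isUnit_iff_isUnit_det R).mp hR.isUnit)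
        hP hRic hc (mul_inv_smul_one_sub_mul hω B)
  exact ⟨hfact, hfact ▸ hR.posSemidef.conjTranspose_mul_mul_same _⟩
end
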